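/- Well-definedness of Φ. Suppose q₀ ∈ L¹(0,1), and let σ_min = min_{x ∈ [0,1]} σ(x) > 0. Then for every k ∈ ℂ and every x ∈ (0,1), the integral Φ(k,x) = ∫₀¹ Ψ(k,x,y)·q₀(y)/√(σ(x)σ(y)) dy converges absolutely, and |Φ(k,x)| ≤ σ_min^{−1} · exp( ∫₀¹ |σ'(ξ)|/σ(ξ) dξ + |Im k| ∫₀¹ dξ/σ(ξ) ) · ‖q₀‖_{L¹(0,1)}. -/

import Mathlib

/-!
Writing `sin` through exponentials gives `|sin (k φ)| ≤ exp (|Im k| |φ|)`, and the alternating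
phase is bounded by `T = ∫ₐᵇ dξ/σ`, because its pieces are integrals of `1/σ > 0` over consecutive
intervals of a subdivision of `[a, b]`. The integral of `∏ |σ'/σ|(y_p)` over the ordered simplex
is at most `Cⁿ/n!` with `C = ∫ₐᵇ |σ'|/σ`, since the `n!` coordinate permutations of the simplex are
a.e. disjoint inside the cube. Hence `∑ₙ S_n^{(a,b)}(k)` is bounded by `exp (|Im k| T + C/2)`.
For `Ψ(k,x,·)` the intervals `[0, min x y]` and `[max x y, 1]` do not overlap, so `|Ψ|` is bounded
by the constant of the claim and the integrand of `Φ` is dominated by `σ_min⁻¹ · const · |q₀|`.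
-/

open MeasureTheory Filter

noncomputable section

/-- Nodes of the simplex: `y₀ = a`, `y_{n+1} = b`, interior nodes from `y`. -/
def nodes (a b : ℝ) (n : ℕ) (y : Fin n → ℝ) (p : ℕ) : ℝ :=
  if h : 1 ≤ p ∧ p ≤ n then y ⟨p - 1, by omega⟩ else if p = 0 then a else b

/-- The ordered simplex `a ≤ y₁ ≤ ⋯ ≤ y_n ≤ b`. -/
def simplex (a b : ℝ) (n : ℕ) : Set (Fin n → ℝ) :=
  {y | Monotone y ∧ ∀ i, y i ∈ Set.Icc a b}

/-- The alternating phase `∑_{p=0}^{n} (−1)^p ∫_{y_p}^{y_{p+1}} dξ/σ(ξ)`. -/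
def phase (σ : ℝ → ℝ) (a b : ℝ) (n : ℕ) (y : Fin n → ℝ) : ℝ :=
  ∑ p ∈ Finset.range (n + 1),
    (-1 : ℝ) ^ p * ∫ ξ in (nodes a b n y p)..(nodes a b n y (p + 1)), 1 / σ ξ

/-- The integrand defining `S_n^{(a,b)}(k)`. -/
def Sintegrand (σ : ℝ → ℝ) (a b : ℝ) (n : ℕ) (k : ℂ) (y : Fin n → ℝ) : ℂ :=
  ((∏ p, deriv σ (y p) / σ (y p) : ℝ) : ℂ) * Complex.sin (k * ((phase σ a b n y : ℝ) : ℂ))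

/-- `S_n^{(a,b)}(k)`. -/
def S (σ : ℝ → ℝ) (a b : ℝ) (n : ℕ) (k : ℂ) : ℂ :=
  ((2 : ℂ) ^ n)⁻¹ * ∫ y in simplex a b n, Sintegrand σ a b n k y

/-- `Δ(k) = ∑_{n=0}^∞ S_n^{(0,1)}(k)`. -/
def Δfun (σ : ℝ → ℝ) (k : ℂ) : ℂ := ∑' n, S σ 0 1 n k

/-- `σ` is absolutely continuous on `[0,1]`: fundamental-theorem-of-calculus
characterization with integrable derivative. -/
def sigmaAC (σ : ℝ → ℝ) : Prop :=
  IntegrableOn (deriv σ) (Set.Icc 0 1) ∧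
    ∀ x ∈ Set.Icc (0 : ℝ) 1, σ x = σ 0 + ∫ t in (0 : ℝ)..x, deriv σ t

/-- `Ψ(k,x,y)`, defined symmetrically. -/
def Psi (σ : ℝ → ℝ) (k : ℂ) (x y : ℝ) : ℂ :=
  if y ≤ x then (∑' n, S σ 0 y n k) * (∑' n, S σ x 1 n k)
  else (∑' n, S σ 0 x n k) * (∑' n, S σ y 1 n k)

open Set
open scoped Nat

lemma Complex.norm_sin_le_exp_abs_im (z : ℂ) : ‖Complex.sin z‖ ≤ Real.exp |z.im| := by
  have h₁ : ‖Complex.exp (-z * Complex.I)‖ = Real.exp z.im := by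
    rw [Complex.norm_exp]; simp
  have h₂ : ‖Complex.exp (z * Complex.I)‖ = Real.exp (-z.im) := by
    rw [Complex.norm_exp]; simp
  calc ‖Complex.sin z‖ ≤ (Real.exp z.im + Real.exp (-z.im)) / 2 := by
        rw [Complex.sin, norm_div, norm_mul, Complex.norm_I, mul_one, Complex.norm_two, ← h₁, ← h₂]
        gcongr
        exact norm_sub_le _ _
    _ ≤ Real.exp |z.im| := by
        have := Real.exp_le_exp.2 (le_abs_self z.im)
        have := Real.exp_le_exp.2 (neg_le_abs z.im)
        linarith

lemma intervalIntegral_add_intervalIntegral_le {f : ℝ → ℝ} {a u v b : ℝ} (hau : a ≤ u)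
    (huv : u ≤ v) (hvb : v ≤ b) (hf : IntervalIntegrable f volume a b)
    (hf₀ : ∀ t ∈ Icc a b, 0 ≤ f t) :
    (∫ t in a..u, f t) + ∫ t in v..b, f t ≤ ∫ t in a..b, f t := by
  have hub : u ≤ b := huv.trans hvb
  rw [← intervalIntegral.integral_add_adjacent_intervals
    (hf.mono_set (uIcc_subset_uIcc_left (Icc_subset_uIcc ⟨hau, hub⟩)))
    (hf.mono_set (uIcc_subset_uIcc_right (Icc_subset_uIcc ⟨hau, hub⟩)))]
  gcongr
  exact intervalIntegral.integral_mono_interval huv hvb le_rfl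
    ((ae_restrict_iff' measurableSet_Ioc).2 (.of_forall fun t ht =>
      hf₀ t ⟨hau.trans ht.1.le, ht.2⟩))
    (hf.mono_set (uIcc_subset_uIcc_right (Icc_subset_uIcc ⟨hau, hub⟩)))

section OrderedSimplex

variable {n : ℕ}

lemma measurableSet_setOf_monotone : MeasurableSet {y : Fin n → ℝ | Monotone y} := by
  simp only [Monotone, ofPred_forall]
  exact .iInter fun i => .iInter fun j => .iInter fun _ =>
    measurableSet_le (measurable_pi_apply i) (measurable_pi_apply j)

lemma measurableSet_setOf_strictMono : MeasurableSet {y : Fin n → ℝ | StrictMono y} := by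
  simp only [StrictMono, ofPred_forall]
  exact .iInter fun i => .iInter fun j => .iInter fun _ =>
    measurableSet_lt (measurable_pi_apply i) (measurable_pi_apply j)

lemma volume_setOf_apply_eq_apply {ι : Type*} [Fintype ι] {i j : ι} (hij : i ≠ j) :
    volume {y : ι → ℝ | y i = y j} = 0 := by
  classical
  let L : (ι → ℝ) →ₗ[ℝ] ℝ := (LinearMap.proj i : (ι → ℝ) →ₗ[ℝ] ℝ) - LinearMap.proj j
  have hset : {y : ι → ℝ | y i = y j} = (LinearMap.ker L : Set (ι → ℝ)) := by
    ext y; simp [L, sub_eq_zero]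
  rw [hset]
  refine Measure.addHaar_submodule _ _ fun htop => ?_
  have : L (Pi.single i 1) = 0 := LinearMap.mem_ker.1 (htop ▸ Submodule.mem_top)
  simp [L, Pi.single_eq_of_ne hij.symm] at this

lemma setOf_monotone_ae_eq_setOf_strictMono :
    {y : Fin n → ℝ | Monotone y} =ᵐ[volume] {y | StrictMono y} := by
  refine (ae_eq_set.2 ⟨measure_mono_null ?_ (measure_biUnion_null_iff (Set.to_countable
    {p : Fin n × Fin n | p.1 ≠ p.2}) |>.2 fun p hp => volume_setOf_apply_eq_apply hp), ?_⟩)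
  · rintro y ⟨hmono, hstrict⟩
    obtain ⟨i, j, hij, hyij⟩ : ∃ i j, i < j ∧ ¬ y i < y j := by
      simpa [StrictMono] using hstrict
    exact mem_biUnion (x := (i, j)) hij.ne (le_antisymm (hmono hij.le) (not_lt.1 hyij))
  · exact measure_mono_null (fun y hy => (hy.2 hy.1.monotone).elim) measure_empty

/-- Distinct permutations `e` cannot both make `y ∘ e` strictly increasing, since such an `e`
is the sorting permutation of `y`. -/
lemma pairwise_disjoint_setOf_strictMono_comp :
    Pairwise (Function.onFun Disjoint fun e : Equiv.Perm (Fin n) =>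
      {y : Fin n → ℝ | StrictMono (y ∘ e)}) := by
  have hsort : ∀ (e : Equiv.Perm (Fin n)) (y : Fin n → ℝ), StrictMono (y ∘ e) → e = Tuple.sort y :=
    fun e y hy => Tuple.eq_sort_iff.2 ⟨hy.monotone, fun i j hij hyij => ((hy hij).ne hyij).elim⟩
  intro e e' hee'
  refine Set.disjoint_left.2 fun y hy hy' => hee' ?_
  rw [hsort e y hy, hsort e' y hy']

lemma setIntegral_strictMono_comp_perm_prod (f : ℝ → ℝ) (e : Equiv.Perm (Fin n)) :
    ∫ y in {y : Fin n → ℝ | StrictMono (y ∘ e)}, ∏ p, f (y p)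
      = ∫ y in {y : Fin n → ℝ | StrictMono y}, ∏ p, f (y p) := by
  let ψ : (Fin n → ℝ) ≃ᵐ (Fin n → ℝ) := (MeasurableEquiv.piCongrLeft (fun _ => ℝ) e).symm
  have hψ : ∀ y, ψ y = y ∘ e := fun y => funext fun p => Equiv.piCongrLeft_symm_apply _ _ _ _
  have hmp : MeasurePreserving ψ := (volume_measurePreserving_piCongrLeft (fun _ => ℝ) e).symm
  have hpre : ψ ⁻¹' {y | StrictMono y} = {y | StrictMono (y ∘ e)} := by
    ext y; simp [hψ]
  rw [← hmp.setIntegral_preimage_emb ψ.measurableEmbedding (fun y => ∏ p, f (y p))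
    {y | StrictMono y}, hpre]
  refine setIntegral_congr_fun (hpre ▸ measurableSet_setOf_strictMono.preimage ψ.measurable)
    fun y _ => ?_
  simp only [hψ, Function.comp_apply]
  exact (Equiv.prod_comp e fun p => f (y p)).symm

lemma setIntegral_monotone_prod_le {f : ℝ → ℝ} (hf : Integrable f) (hf₀ : 0 ≤ f) :
    ∫ y in {y : Fin n → ℝ | Monotone y}, ∏ p, f (y p) ≤ (∫ t, f t) ^ n / n ! := by
  have hint : Integrable fun y : Fin n → ℝ => ∏ p, f (y p) :=
    Integrable.fintype_prod (f := fun _ => f) fun _ => hf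
  have hsum : (n ! : ℝ) * ∫ y in {y : Fin n → ℝ | StrictMono y}, ∏ p, f (y p)
      = ∫ y in ⋃ e : Equiv.Perm (Fin n), {y : Fin n → ℝ | StrictMono (y ∘ e)}, ∏ p, f (y p) := by
    have hmeas (e : Equiv.Perm (Fin n)) : MeasurableSet {y : Fin n → ℝ | StrictMono (y ∘ e)} :=
      measurableSet_setOf_strictMono.preimage
        (measurable_pi_lambda _ fun p => measurable_pi_apply _)
    rw [integral_iUnion_fintype hmeas pairwise_disjoint_setOf_strictMono_comp
      fun _ => hint.integrableOn]
    simp [setIntegral_strictMono_comp_perm_prod, Fintype.card_perm]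
  rw [setIntegral_congr_set setOf_monotone_ae_eq_setOf_strictMono, le_div_iff₀ (by positivity),
    mul_comm, hsum]
  calc _ ≤ ∫ y : Fin n → ℝ, ∏ p, f (y p) :=
        setIntegral_le_integral hint (.of_forall fun y => Finset.prod_nonneg fun p _ => hf₀ _)
    _ = (∫ t, f t) ^ n := by rw [integral_fintype_prod_volume_eq_pow, Fintype.card_fin]

end OrderedSimplex

section Simplex

variable {a b : ℝ} {n : ℕ} {y : Fin n → ℝ}

lemma nodes_zero : nodes a b n y 0 = a := by
  simp [nodes]

lemma nodes_of_lt {p : ℕ} (hp : n < p) : nodes a b n y p = b := by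
  rw [nodes, dif_neg (by omega), if_neg (by omega)]

lemma nodes_mem_Icc (hab : a ≤ b) (hy : y ∈ simplex a b n) (p : ℕ) :
    nodes a b n y p ∈ Icc a b := by
  unfold nodes
  split_ifs
  exacts [hy.2 _, left_mem_Icc.2 hab, right_mem_Icc.2 hab]

lemma nodes_le_nodes_succ (hab : a ≤ b) (hy : y ∈ simplex a b n) (p : ℕ) :
    nodes a b n y p ≤ nodes a b n y (p + 1) := by
  rcases lt_or_ge n (p + 1) with hp | hp
  · exact nodes_of_lt hp ▸ (nodes_mem_Icc hab hy p).2
  rcases p with _ | p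
  · exact nodes_zero (y := y) ▸ (nodes_mem_Icc hab hy 1).1
  · simp only [nodes, show 1 ≤ p + 1 ∧ p + 1 ≤ n by omega, show 1 ≤ p + 1 + 1 ∧ p + 1 + 1 ≤ n by
      omega]
    exact hy.1 (Fin.mk_le_mk.2 (by omega))

variable {W : Type*} [MeasurableSpace W] {α β : W → ℝ} {Y : W → Fin n → ℝ}

lemma measurable_nodes (hα : Measurable α) (hβ : Measurable β) (hY : Measurable Y) (p : ℕ) :
    Measurable fun w => nodes (α w) (β w) n (Y w) p := by
  unfold nodes
  split_ifs
  exacts [(measurable_pi_apply _).comp hY, hα, hβ]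

lemma measurableSet_setOf_mem_simplex (hα : Measurable α) (hβ : Measurable β)
    (hY : Measurable Y) : MeasurableSet {w | Y w ∈ simplex (α w) (β w) n} := by
  have hset : {w | Y w ∈ simplex (α w) (β w) n}
      = Y ⁻¹' {y | Monotone y} ∩ ⋂ i, {w | α w ≤ Y w i} ∩ {w | Y w i ≤ β w} := by
    ext w; simp [simplex, forall_and]
  rw [hset]
  exact (measurableSet_setOf_monotone.preimage hY).inter <| .iInter fun i =>
    (measurableSet_le hα ((measurable_pi_apply i).comp hY)).inter
      (measurableSet_le ((measurable_pi_apply i).comp hY) hβ)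

lemma measurableSet_simplex : MeasurableSet (simplex a b n) :=
  measurableSet_setOf_mem_simplex (W := Fin n → ℝ) measurable_const measurable_const measurable_id

end Simplex

section Phase

variable {σ : ℝ → ℝ} {a b : ℝ} {n : ℕ} {y : Fin n → ℝ}

lemma phase_congr {τ : ℝ → ℝ} (hab : a ≤ b) (hστ : EqOn σ τ (Icc a b))
    (hy : y ∈ simplex a b n) : phase σ a b n y = phase τ a b n y := by
  refine Finset.sum_congr rfl fun p _ => ?_
  congr 1
  refine intervalIntegral.integral_congr fun t ht => ?_
  have ht' := uIcc_subset_Icc (nodes_mem_Icc hab hy p) (nodes_mem_Icc hab hy (p + 1)) ht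
  simp only [one_div, hστ ht']

lemma abs_phase_le (hab : a ≤ b) (hσ : ∀ t ∈ Icc a b, 0 < σ t)
    (hint : IntervalIntegrable (fun t => 1 / σ t) volume a b) (hy : y ∈ simplex a b n) :
    |phase σ a b n y| ≤ ∫ t in a..b, 1 / σ t := by
  have hmem := nodes_mem_Icc hab hy
  have hpiece (p : ℕ) : IntervalIntegrable (fun t => 1 / σ t) volume
      (nodes a b n y p) (nodes a b n y (p + 1)) :=
    hint.mono_set (uIcc_subset_uIcc (Icc_subset_uIcc (hmem p)) (Icc_subset_uIcc (hmem (p + 1))))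
  have hnonneg (p : ℕ) : 0 ≤ ∫ t in (nodes a b n y p)..(nodes a b n y (p + 1)), 1 / σ t :=
    intervalIntegral.integral_nonneg (nodes_le_nodes_succ hab hy p) fun t ht =>
      one_div_nonneg.2 (hσ t ⟨(hmem p).1.trans ht.1, ht.2.trans (hmem (p + 1)).2⟩).le
  calc |phase σ a b n y|
      ≤ ∑ p ∈ Finset.range (n + 1), ∫ t in (nodes a b n y p)..(nodes a b n y (p + 1)), 1 / σ t := by
        refine (Finset.abs_sum_le_sum_abs _ _).trans_eq (Finset.sum_congr rfl fun p _ => ?_)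
        rw [abs_mul, abs_pow, abs_neg, abs_one, one_pow, one_mul, abs_of_nonneg (hnonneg p)]
    _ = ∫ t in a..b, 1 / σ t := by
        rw [intervalIntegral.sum_integral_adjacent_intervals fun p _ => hpiece p, nodes_zero,
          nodes_of_lt (Nat.lt_succ_self n)]

lemma continuous_intervalIntegral_bounds {f : ℝ → ℝ}
    (hf : ∀ u v, IntervalIntegrable f volume u v) :
    Continuous fun p : ℝ × ℝ => ∫ t in p.1..p.2, f t := by
  have hprim := intervalIntegral.continuous_primitive hf 0
  have hsub : (fun p : ℝ × ℝ => ∫ t in p.1..p.2, f t)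
      = fun p => (∫ t in 0..p.2, f t) - ∫ t in 0..p.1, f t :=
    funext fun p => (intervalIntegral.integral_interval_sub_left (hf 0 _) (hf 0 _)).symm
  rw [hsub]
  exact (hprim.comp continuous_snd).sub (hprim.comp continuous_fst)

lemma measurable_phase {W : Type*} [MeasurableSpace W] {α β : W → ℝ} {Y : W → Fin n → ℝ}
    (hσ : ∀ u v, IntervalIntegrable (fun t => 1 / σ t) volume u v) (hα : Measurable α)
    (hβ : Measurable β) (hY : Measurable Y) :
    Measurable fun w => phase σ (α w) (β w) n (Y w) :=
  Finset.measurable_sum _ fun p _ => measurable_const.mul <|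
    (continuous_intervalIntegral_bounds hσ).measurable.comp <|
      (measurable_nodes hα hβ hY p).prodMk (measurable_nodes hα hβ hY (p + 1))

end Phase

section Bounds

variable {σ : ℝ → ℝ} {a b : ℝ} {n : ℕ} {k : ℂ}

lemma norm_Sintegrand_le (hab : a ≤ b) (hσ : ∀ t ∈ Icc a b, 0 < σ t)
    (hint : IntervalIntegrable (fun t => 1 / σ t) volume a b) {y : Fin n → ℝ}
    (hy : y ∈ simplex a b n) :
    ‖Sintegrand σ a b n k y‖
      ≤ Real.exp (|k.im| * ∫ t in a..b, 1 / σ t) * ∏ p, |deriv σ (y p)| / σ (y p) := by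
  have hprod : ‖((∏ p, deriv σ (y p) / σ (y p) : ℝ) : ℂ)‖ = ∏ p, |deriv σ (y p)| / σ (y p) := by
    rw [Complex.norm_real, Real.norm_eq_abs, Finset.abs_prod]
    exact Finset.prod_congr rfl fun p _ => by rw [abs_div, abs_of_pos (hσ _ (hy.2 p))]
  have hsin : ‖Complex.sin (k * (phase σ a b n y : ℂ))‖
      ≤ Real.exp (|k.im| * ∫ t in a..b, 1 / σ t) := by
    refine (Complex.norm_sin_le_exp_abs_im _).trans (Real.exp_le_exp.2 ?_)
    rw [Complex.im_mul_ofReal, abs_mul]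
    exact mul_le_mul_of_nonneg_left (abs_phase_le hab hσ hint hy) (abs_nonneg _)
  rw [Sintegrand, norm_mul, hprod, mul_comm]
  exact mul_le_mul_of_nonneg_right hsin (Finset.prod_nonneg fun p _ =>
    div_nonneg (abs_nonneg _) (hσ _ (hy.2 p)).le)

lemma eqOn_simplex_prod_indicator (f : ℝ → ℝ) :
    EqOn (fun y : Fin n → ℝ => ∏ p, f (y p)) (fun y => ∏ p, (Icc a b).indicator f (y p))
      (simplex a b n) :=
  fun _ hy => Finset.prod_congr rfl fun p _ => (indicator_of_mem (hy.2 p) f).symm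

lemma integrableOn_simplex_prod {f : ℝ → ℝ} (hf : IntegrableOn f (Icc a b)) :
    IntegrableOn (fun y : Fin n → ℝ => ∏ p, f (y p)) (simplex a b n) :=
  (Integrable.fintype_prod (f := fun _ => (Icc a b).indicator f) fun _ =>
    (integrable_indicator_iff measurableSet_Icc).2 hf).integrableOn.congr_fun
      (eqOn_simplex_prod_indicator f).symm measurableSet_simplex

lemma setIntegral_simplex_prod_le {f : ℝ → ℝ} (hab : a ≤ b) (hf : IntegrableOn f (Icc a b))
    (hf₀ : ∀ t ∈ Icc a b, 0 ≤ f t) :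
    ∫ y in simplex a b n, ∏ p, f (y p) ≤ (∫ t in a..b, f t) ^ n / n ! := by
  have hg₀ : 0 ≤ (Icc a b).indicator f := indicator_nonneg hf₀
  have hg : Integrable ((Icc a b).indicator f) := (integrable_indicator_iff measurableSet_Icc).2 hf
  calc ∫ y in simplex a b n, ∏ p, f (y p)
      = ∫ y in simplex a b n, ∏ p, (Icc a b).indicator f (y p) :=
        setIntegral_congr_fun measurableSet_simplex (eqOn_simplex_prod_indicator f)
    _ ≤ ∫ y in {y : Fin n → ℝ | Monotone y}, ∏ p, (Icc a b).indicator f (y p) :=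
        setIntegral_mono_set (Integrable.fintype_prod (f := fun _ => _) fun _ => hg).integrableOn
          (.of_forall fun y => Finset.prod_nonneg fun p _ => hg₀ _)
          (Eventually.of_forall fun y hy => hy.1)
    _ ≤ (∫ t, (Icc a b).indicator f t) ^ n / n ! := setIntegral_monotone_prod_le hg hg₀
    _ = (∫ t in a..b, f t) ^ n / n ! := by
        rw [integral_indicator measurableSet_Icc, integral_Icc_eq_integral_Ioc,
          intervalIntegral.integral_of_le hab]

lemma integrableOn_abs_deriv_div (hσ : ∀ t ∈ Icc a b, 0 < σ t)
    (h₂ : IntegrableOn (fun t => deriv σ t / σ t) (Icc a b)) :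
    IntegrableOn (fun t => |deriv σ t| / σ t) (Icc a b) :=
  IntegrableOn.congr_fun h₂.norm (fun t ht => by simp [abs_of_pos (hσ t ht)]) measurableSet_Icc

end Bounds

section Series

variable {σ : ℝ → ℝ} {a b : ℝ} (hab : a ≤ b) (hσ : ∀ t ∈ Icc a b, 0 < σ t)
  (h₁ : IntervalIntegrable (fun t => 1 / σ t) volume a b)
  (h₂ : IntegrableOn (fun t => deriv σ t / σ t) (Icc a b))
include hab hσ h₁ h₂

lemma norm_S_le (n : ℕ) (k : ℂ) :
    ‖S σ a b n k‖ ≤ Real.exp (|k.im| * ∫ t in a..b, 1 / σ t)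
      * (((∫ t in a..b, |deriv σ t| / σ t) / 2) ^ n / n !) := by
  set E := Real.exp (|k.im| * ∫ t in a..b, 1 / σ t)
  have hf := integrableOn_abs_deriv_div hσ h₂
  have hf₀ : ∀ t ∈ Icc a b, 0 ≤ |deriv σ t| / σ t :=
    fun t ht => div_nonneg (abs_nonneg _) (hσ t ht).le
  have hint : ‖∫ y in simplex a b n, Sintegrand σ a b n k y‖
      ≤ E * ((∫ t in a..b, |deriv σ t| / σ t) ^ n / n !) := by
    refine (norm_integral_le_of_norm_le ((integrableOn_simplex_prod hf).const_mul E)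
      ((ae_restrict_iff' measurableSet_simplex).2 (.of_forall fun y hy =>
        norm_Sintegrand_le hab hσ h₁ hy))).trans ?_
    rw [integral_const_mul]
    exact mul_le_mul_of_nonneg_left (setIntegral_simplex_prod_le hab hf hf₀) (Real.exp_nonneg _)
  rw [S, norm_mul, norm_inv, norm_pow, Complex.norm_two, div_pow]
  calc _ ≤ (2 ^ n)⁻¹ * (E * ((∫ t in a..b, |deriv σ t| / σ t) ^ n / n !)) := by gcongr
    _ = _ := by ring

lemma summable_S (k : ℂ) : Summable fun n => S σ a b n k :=
  .of_norm_bounded ((Real.summable_pow_div_factorial _).mul_left _) (norm_S_le hab hσ h₁ h₂ · k)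

lemma norm_tsum_S_le (k : ℂ) :
    ‖∑' n, S σ a b n k‖
      ≤ Real.exp ((∫ t in a..b, |deriv σ t| / σ t) + |k.im| * ∫ t in a..b, 1 / σ t) := by
  have hC : 0 ≤ ∫ t in a..b, |deriv σ t| / σ t :=
    intervalIntegral.integral_nonneg hab fun t ht => div_nonneg (abs_nonneg _) (hσ t ht).le
  refine (tsum_of_norm_bounded
    ((Real.exp_eq_exp_ℝ ▸ NormedSpace.expSeries_div_hasSum_exp _).mul_left _)
    (norm_S_le hab hσ h₁ h₂ · k)).trans ?_
  rw [← Real.exp_add, Real.exp_le_exp]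
  linarith

end Series

section Measurability

variable {σ τ : ℝ → ℝ} {n : ℕ} {k : ℂ} {s : Set ℝ} {α β : ℝ → ℝ}

lemma exists_continuous_ne_zero_eqOn {a b : ℝ} (hab : a ≤ b) (hσ : ContinuousOn σ (Icc a b))
    (hσpos : ∀ t ∈ Icc a b, 0 < σ t) :
    ∃ τ : ℝ → ℝ, Continuous τ ∧ (∀ t, τ t ≠ 0) ∧ EqOn σ τ (Icc a b) :=
  ⟨IccExtend hab ((Icc a b).domRestrict σ), hσ.domRestrict.Icc_extend',
    fun t => (hσpos _ (projIcc a b hab t).2).ne',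
    fun _ ht => (IccExtend_of_mem hab ((Icc a b).domRestrict σ) ht).symm⟩

lemma Sintegrand_eq_of_eqOn {a b : ℝ} (hab : a ≤ b) (hστ : EqOn σ τ (Icc a b)) {y : Fin n → ℝ}
    (hy : y ∈ simplex a b n) :
    Sintegrand σ a b n k y
      = ((∏ p, deriv σ (y p) / τ (y p) : ℝ) : ℂ) * Complex.sin (k * (phase τ a b n y : ℂ)) := by
  rw [Sintegrand, phase_congr hab hστ hy, Finset.prod_congr rfl fun p _ => by rw [hστ (hy.2 p)]]

variable (hτ : Continuous τ) (hτ₀ : ∀ t, τ t ≠ 0) (hs : MeasurableSet s) (hα : Measurable α)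
  (hβ : Measurable β) (hαβ : ∀ t ∈ s, α t ≤ β t) (hστ : ∀ t ∈ s, EqOn σ τ (Icc (α t) (β t)))
include hτ hτ₀ hs hα hβ hαβ hστ

/-- On `s`, `S` is a slice integral of a jointly measurable function of the endpoint parameter
and the simplex variable, where `σ` has been replaced by the globally continuous `τ`. -/
lemma aestronglyMeasurable_S :
    AEStronglyMeasurable (fun t => S σ (α t) (β t) n k) (volume.restrict s) := by
  let A := {w : ℝ × (Fin n → ℝ) | w.2 ∈ simplex (α w.1) (β w.1) n}
  let G := fun w : ℝ × (Fin n → ℝ) => ((∏ p, deriv σ (w.2 p) / τ (w.2 p) : ℝ) : ℂ)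
    * Complex.sin (k * (phase τ (α w.1) (β w.1) n w.2 : ℂ))
  have hG : Measurable G := by
    refine (Complex.measurable_ofReal.comp <| Finset.measurable_prod _ fun p _ =>
      ((measurable_deriv σ).comp ?_).div (hτ.measurable.comp ?_)).mul
      (Complex.continuous_sin.measurable.comp <| measurable_const.mul <|
        Complex.measurable_ofReal.comp <| measurable_phase
          (fun u v => (continuous_const.div hτ hτ₀).intervalIntegrable u v)
          (hα.comp measurable_fst) (hβ.comp measurable_fst) measurable_snd) <;>
    exact (measurable_pi_apply p).comp measurable_snd
  have hA : MeasurableSet A :=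
    measurableSet_setOf_mem_simplex (hα.comp measurable_fst) (hβ.comp measurable_fst) measurable_snd
  refine (((hG.indicator hA).stronglyMeasurable.integral_prod_right' (ν := volume)).const_mul
    ((2 : ℂ) ^ n)⁻¹).aestronglyMeasurable.congr
      ((ae_restrict_iff' hs).2 (.of_forall fun t ht => ?_))
  dsimp only
  rw [S, ← integral_indicator measurableSet_simplex]
  congr 1
  refine integral_congr_ae (.of_forall fun y => ?_)
  dsimp only
  by_cases hy : y ∈ simplex (α t) (β t) n
  · rw [indicator_of_mem (show (t, y) ∈ A from hy), indicator_of_mem hy,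
      Sintegrand_eq_of_eqOn (hαβ t ht) (hστ t ht) hy]
  · rw [indicator_of_notMem (show (t, y) ∉ A from hy), indicator_of_notMem hy]

lemma aestronglyMeasurable_tsum_S (hsum : ∀ t ∈ s, Summable fun n => S σ (α t) (β t) n k) :
    AEStronglyMeasurable (fun t => ∑' n, S σ (α t) (β t) n k) (volume.restrict s) :=
  aestronglyMeasurable_of_tendsto_ae atTop
    (fun _ => Finset.aestronglyMeasurable_fun_sum _ fun _ _ =>
      aestronglyMeasurable_S hτ hτ₀ hs hα hβ hαβ hστ)
    ((ae_restrict_iff' hs).2 (.of_forall fun t ht => (hsum t ht).hasSum.tendsto_sum_nat))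

end Measurability

lemma sigmaAC.continuousOn {σ : ℝ → ℝ} (hσ : sigmaAC σ) : ContinuousOn σ (Icc 0 1) := by
  have hprim : ContinuousOn (fun x => ∫ t in (0 : ℝ)..x, deriv σ t) (Icc 0 1) := by
    simpa [uIcc_of_le zero_le_one] using intervalIntegral.continuousOn_primitive_interval'
      ((intervalIntegrable_iff_integrableOn_Icc_of_le zero_le_one).2 hσ.1)
      (left_mem_uIcc (a := (0 : ℝ)) (b := 1))
  exact (continuousOn_const.add hprim).congr hσ.2

section UnitInterval

variable {σ : ℝ → ℝ} {k : ℂ} {a b : ℝ} (hσ : ContinuousOn σ (Icc 0 1))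
  (hσpos : ∀ t ∈ Icc (0 : ℝ) 1, 0 < σ t)
  (hratio : IntegrableOn (fun t => deriv σ t / σ t) (Icc 0 1))

include hσ hσpos in
lemma intervalIntegrable_one_div_of_unitInterval (ha : 0 ≤ a) (hab : a ≤ b) (hb : b ≤ 1) :
    IntervalIntegrable (fun t => 1 / σ t) volume a b :=
  (continuousOn_const.div (hσ.mono (Icc_subset_Icc ha hb)) fun t ht =>
    (hσpos t (Icc_subset_Icc ha hb ht)).ne').intervalIntegrable_of_Icc hab

include hσ hσpos hratio

lemma summable_S_of_unitInterval (ha : 0 ≤ a) (hab : a ≤ b) (hb : b ≤ 1) :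
    Summable fun n => S σ a b n k :=
  summable_S hab (fun t ht => hσpos t (Icc_subset_Icc ha hb ht))
    (intervalIntegrable_one_div_of_unitInterval hσ hσpos ha hab hb)
    (hratio.mono_set (Icc_subset_Icc ha hb)) k

lemma norm_tsum_S_le_of_unitInterval (ha : 0 ≤ a) (hab : a ≤ b) (hb : b ≤ 1) :
    ‖∑' n, S σ a b n k‖
      ≤ Real.exp ((∫ t in a..b, |deriv σ t| / σ t) + |k.im| * ∫ t in a..b, 1 / σ t) :=
  norm_tsum_S_le hab (fun t ht => hσpos t (Icc_subset_Icc ha hb ht))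
    (intervalIntegrable_one_div_of_unitInterval hσ hσpos ha hab hb)
    (hratio.mono_set (Icc_subset_Icc ha hb)) k

lemma norm_tsum_S_mul_tsum_S_le {x y : ℝ} (hx : 0 ≤ x) (hxy : x ≤ y) (hy : y ≤ 1) :
    ‖(∑' n, S σ 0 x n k) * ∑' n, S σ y 1 n k‖
      ≤ Real.exp ((∫ t in (0 : ℝ)..1, |deriv σ t| / σ t)
          + |k.im| * ∫ t in (0 : ℝ)..1, 1 / σ t) := by
  rw [norm_mul]
  refine (mul_le_mul (norm_tsum_S_le_of_unitInterval hσ hσpos hratio le_rfl hx (hxy.trans hy))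
    (norm_tsum_S_le_of_unitInterval hσ hσpos hratio (hx.trans hxy) hy le_rfl) (norm_nonneg _)
    (Real.exp_nonneg _)).trans ?_
  rw [← Real.exp_add, Real.exp_le_exp]
  have hC := intervalIntegral_add_intervalIntegral_le hx hxy hy
    ((intervalIntegrable_iff_integrableOn_Icc_of_le zero_le_one).2
      (integrableOn_abs_deriv_div hσpos hratio))
    fun t ht => div_nonneg (abs_nonneg _) (hσpos t ht).le
  have hT := intervalIntegral_add_intervalIntegral_le hx hxy hy
    (intervalIntegrable_one_div_of_unitInterval hσ hσpos le_rfl zero_le_one le_rfl)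
    fun t ht => one_div_nonneg.2 (hσpos t ht).le
  nlinarith [abs_nonneg k.im]

lemma norm_Psi_le {x y : ℝ} (hx : x ∈ Icc (0 : ℝ) 1) (hy : y ∈ Icc (0 : ℝ) 1) :
    ‖Psi σ k x y‖
      ≤ Real.exp ((∫ t in (0 : ℝ)..1, |deriv σ t| / σ t)
          + |k.im| * ∫ t in (0 : ℝ)..1, 1 / σ t) := by
  unfold Psi
  split_ifs with hyx
  · exact norm_tsum_S_mul_tsum_S_le hσ hσpos hratio hy.1 hyx hx.2
  · exact norm_tsum_S_mul_tsum_S_le hσ hσpos hratio hx.1 (le_of_not_ge hyx) hy.2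

lemma aestronglyMeasurable_Psi (x : ℝ) :
    AEStronglyMeasurable (Psi σ k x) (volume.restrict (Icc 0 1)) := by
  obtain ⟨τ, hτ, hτ₀, hστ⟩ := exists_continuous_ne_zero_eqOn zero_le_one hσ hσpos
  have hleft : AEStronglyMeasurable (fun y => ∑' n, S σ 0 y n k) (volume.restrict (Icc 0 1)) :=
    aestronglyMeasurable_tsum_S hτ hτ₀ measurableSet_Icc measurable_const measurable_id
      (fun t ht => ht.1) (fun t ht => hστ.mono (Icc_subset_Icc le_rfl ht.2))
      fun t ht => summable_S_of_unitInterval hσ hσpos hratio le_rfl ht.1 ht.2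
  have hright : AEStronglyMeasurable (fun y => ∑' n, S σ y 1 n k) (volume.restrict (Icc 0 1)) :=
    aestronglyMeasurable_tsum_S hτ hτ₀ measurableSet_Icc measurable_id measurable_const
      (fun t ht => ht.2) (fun t ht => hστ.mono (Icc_subset_Icc ht.1 le_rfl))
      fun t ht => summable_S_of_unitInterval hσ hσpos hratio ht.1 ht.2 le_rfl
  have hpiece : Psi σ k x = (Iic x).piecewise (fun y => (∑' n, S σ 0 y n k) * ∑' n, S σ x 1 n k)
      (fun y => (∑' n, S σ 0 x n k) * ∑' n, S σ y 1 n k) := by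
    ext y; by_cases hyx : y ≤ x <;> simp [Psi, hyx]
  rw [hpiece]
  exact .piecewise measurableSet_Iic (hleft.mul aestronglyMeasurable_const).restrict
    (aestronglyMeasurable_const.mul hright).restrict

end UnitInterval

lemma norm_mul_div_sqrt_le {P : ℂ} {q B m s₁ s₂ : ℝ} (hP : ‖P‖ ≤ B) (hm : 0 < m) (h₁ : m ≤ s₁)
    (h₂ : m ≤ s₂) : ‖P * (q : ℂ) / (Real.sqrt (s₁ * s₂) : ℂ)‖ ≤ m⁻¹ * B * |q| := by
  have hsqrt : m ≤ Real.sqrt (s₁ * s₂) := Real.le_sqrt_of_sq_le (by nlinarith)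
  have hB : 0 ≤ B := (norm_nonneg P).trans hP
  rw [norm_div, norm_mul, Complex.norm_real, Complex.norm_real, Real.norm_eq_abs,
    Real.norm_of_nonneg (Real.sqrt_nonneg _)]
  calc ‖P‖ * |q| / Real.sqrt (s₁ * s₂) ≤ B * |q| / m := by gcongr
    _ = m⁻¹ * B * |q| := by ring

/-- Well-definedness of `Φ(k,x) = ∫₀¹ Ψ(k,x,y) q₀(y)/√(σ(x)σ(y)) dy`,
with the explicit bound in terms of `σ_min = min_{[0,1]} σ`. -/
theorem stmt_16 (σ : ℝ → ℝ)
    (hσpos : ∀ x ∈ Set.Icc (0 : ℝ) 1, 0 < σ x)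
    (hσAC : sigmaAC σ)
    (hratio : IntegrableOn (fun t => deriv σ t / σ t) (Set.Ioo 0 1))
    (q₀ : ℝ → ℝ) (hq₀ : IntegrableOn q₀ (Set.Ioo 0 1))
    (σmin : ℝ) (hσmin : IsLeast (σ '' Set.Icc (0 : ℝ) 1) σmin)
    (k : ℂ) (x : ℝ) (hx : x ∈ Set.Ioo (0 : ℝ) 1) :
    IntegrableOn (fun y => Psi σ k x y * ((q₀ y : ℝ) : ℂ) / ((Real.sqrt (σ x * σ y) : ℝ) : ℂ))
      (Set.Ioo 0 1) ∧
    ‖∫ y in Set.Ioo (0 : ℝ) 1,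
        Psi σ k x y * ((q₀ y : ℝ) : ℂ) / ((Real.sqrt (σ x * σ y) : ℝ) : ℂ)‖ ≤
      σmin⁻¹ *
        Real.exp ((∫ ξ in (0 : ℝ)..1, |deriv σ ξ| / σ ξ) + |k.im| * ∫ ξ in (0 : ℝ)..1, 1 / σ ξ) *
        ∫ y in Set.Ioo (0 : ℝ) 1, |q₀ y| := by
  obtain ⟨⟨t₀, ht₀, rfl⟩, hmin⟩ := hσmin
  have hσ := hσAC.continuousOn
  have hratio' := (integrableOn_Icc_iff_integrableOn_Ioo).2 hratio
  have hIoo : volume.restrict (Ioo (0 : ℝ) 1) ≤ volume.restrict (Icc 0 1) :=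
    Measure.restrict_mono Ioo_subset_Icc_self le_rfl
  set B := Real.exp ((∫ ξ in (0 : ℝ)..1, |deriv σ ξ| / σ ξ) + |k.im| * ∫ ξ in (0 : ℝ)..1, 1 / σ ξ)
  have hbound : ∀ᵐ y ∂volume.restrict (Ioo (0 : ℝ) 1),
      ‖Psi σ k x y * ((q₀ y : ℝ) : ℂ) / ((Real.sqrt (σ x * σ y) : ℝ) : ℂ)‖
        ≤ (σ t₀)⁻¹ * B * |q₀ y| :=
    (ae_restrict_iff' measurableSet_Ioo).2 <| .of_forall fun y hy =>
      norm_mul_div_sqrt_le (norm_Psi_le hσ hσpos hratio' (Ioo_subset_Icc_self hx)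
        (Ioo_subset_Icc_self hy)) (hσpos t₀ ht₀) (hmin ⟨x, Ioo_subset_Icc_self hx, rfl⟩)
        (hmin ⟨y, Ioo_subset_Icc_self hy, rfl⟩)
  have hmeas : AEStronglyMeasurable
      (fun y => Psi σ k x y * ((q₀ y : ℝ) : ℂ) / ((Real.sqrt (σ x * σ y) : ℝ) : ℂ))
      (volume.restrict (Ioo 0 1)) :=
    (((aestronglyMeasurable_Psi hσ hσpos hratio' x).mono_measure hIoo).mul
      (Complex.continuous_ofReal.comp_aestronglyMeasurable hq₀.1)).div₀
      (Complex.continuous_ofReal.comp_aestronglyMeasurable <| ContinuousOn.aestronglyMeasurable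
        (Real.continuous_sqrt.comp_continuousOn (continuousOn_const.mul hσ)) measurableSet_Icc
        |>.mono_measure hIoo)
  have hdom := hq₀.abs.const_mul ((σ t₀)⁻¹ * B)
  refine ⟨hdom.mono' hmeas hbound, ?_⟩
  rw [← integral_const_mul]
  exact norm_integral_le_of_norm_le hdom hbound
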